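/- arXiv:1912.02028 — 3 statements merged into one kernel-verified Lean document; each statement's English description precedes it below -/
import Mathlib

section
/- Let r be a reward function that is differentiable on [0,∞), let c > 0 and p ∈ (0,1), and let σ be a normal stationary policy on [0,c] satisfying r'(σ(x)) ≥ (1−p)·r'(σ(x − σ(x))) for Lebesgue-almost every x ∈ [0,c]. Then for every Borel probability measure Q on [0,c] with mean ∫ x dQ(x) = pc, every initial battery level x ∈ [0,c], and every n ≥ 1, the expected n-horizon total reward under i.i.d. Bernoulli arrivals is no larger than under i.i.d. Q arrivals: E_{X^n ∼ B̃_p^{⊗n}}[R_n(σ, X^n, x)] ≤ E_{X^n ∼ Q^{⊗n}}[R_n(σ, X^n, x)], where B̃_p := (1−p)δ_0 + p δ_c. -/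
/-!
Under i.i.d. `B̃_p` arrivals the battery is, after spending `σ b`, either refilled to `c` or left
at `b - σ b`. So the expected reward of `m` further slots seen from the post-arrival level `b` is
`V_m b`, where `V_{m+1} b = r (σ b) + p V_m c + (1 - p) V_m (b - σ b)`, and the expected reward
from the pre-arrival level `x ∈ [0, c]` is `(1 - p) V_m x + p V_m c`.

Each `V_m` is nondecreasing and concave on `[0, c]`, with right slopes at `u` at most
`r' (σ u)`. Both facts are proved by induction, first at the points `b` where the non-greedy
condition holds: there `r' (σ b)` separates the left and right slopes of `r` at `σ b` and bounds
`(1 - p)` times the right slopes of `V_m` at `b - σ b`, so the three-point inequalities for `σ`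
and `V_m` combine into the one for `V_{m+1}`. Such points are dense, which suffices by continuity.

A concave nondecreasing `V` on `[0, c]` lies above its chord:
`V (min (x + y) c) ≥ V x + (y / c) (V c - V x)`. Integrating against `Q`, whose mean is `p c`,
shows that replacing the first Bernoulli arrival by a `Q` arrival does not decrease the expected
reward; induction on the horizon replaces all of them.
-/
open Set MeasureTheory

/-- Battery levels: `battery c σ x xs t` is the battery level `b_{t+1}` (just after the
arrival of `xs t`) when the initial level is `b_{1⁻} = x`, the arrivals are
`xs 0, xs 1, …`, and the stationary policy `σ` is used: `b_t = min (b_{t⁻} + x_t) c`,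
`b_{(t+1)⁻} = b_t - σ (b_t)`. -/
noncomputable def battery (c : ℝ) (σ : ℝ → ℝ) (x : ℝ) (xs : ℕ → ℝ) : ℕ → ℝ
  | 0 => min (x + xs 0) c
  | t + 1 => min (battery c σ x xs t - σ (battery c σ x xs t) + xs (t + 1)) c

/-- The `n`-horizon total reward `R_n(σ, (x_1, …, x_n), x) = ∑_{t=1}^n r (σ (b_t))`. -/
noncomputable def totalReward (r : ℝ → ℝ) (c : ℝ) (σ : ℝ → ℝ) (x : ℝ) (xs : ℕ → ℝ)
    (n : ℕ) : ℝ :=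
  ∑ t ∈ Finset.range n, r (σ (battery c σ x xs t))

/-- The Bernoulli energy-arrival distribution `B̃_p = (1-p) δ_0 + p δ_c`. -/
noncomputable def bern (c p : ℝ) : Measure ℝ :=
  ENNReal.ofReal (1 - p) • Measure.dirac 0 + ENNReal.ofReal p • Measure.dirac c

theorem ConcaveOn.sub_mul_sub_le {f : ℝ → ℝ} {s : Set ℝ} (hf : ConcaveOn ℝ s f) {x y z : ℝ}
    (hx : x ∈ s) (hz : z ∈ s) (hxy : x ≤ y) (hyz : y ≤ z) :
    (f z - f y) * (y - x) ≤ (f y - f x) * (z - y) := by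
  rcases hxy.eq_or_lt with rfl | hxy
  · simp
  rcases hyz.eq_or_lt with rfl | hyz
  · simp
  have := hf.slope_anti_adjacent hx hz hxy hyz
  rwa [div_le_div_iff₀ (by linarith) (by linarith)] at this

theorem concaveOn_of_sub_mul_sub_le {f : ℝ → ℝ} {s : Set ℝ} (hs : Convex ℝ s)
    (hf : ∀ ⦃x y z⦄, x ∈ s → z ∈ s → x < y → y < z →
      (f z - f y) * (y - x) ≤ (f y - f x) * (z - y)) :
    ConcaveOn ℝ s f :=
  concaveOn_iff_slope_anti_adjacent.2 ⟨hs, fun x y z hx hz hxy hyz => by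
    rw [div_le_div_iff₀ (by linarith) (by linarith)]
    exact hf hx hz hxy hyz⟩

/-- Mediant inequality: the slope `(R₂ + W₂) / (s₂ + t₂)` is at most `(R₁ + W₁) / (s₁ + t₁)` when
`R₂ / s₂ ≤ q ≤ R₁ / s₁`, `W₂ / t₂ ≤ q`, `s₂ / t₂ ≤ s₁ / t₁` and `W₂ / t₂ ≤ W₁ / t₁`; products
instead of quotients allow zero lengths. -/
theorem add_mul_add_le_add_mul_add {q s₁ s₂ t₁ t₂ R₁ R₂ W₁ W₂ : ℝ}
    (hs₁ : 0 ≤ s₁) (hs₂ : 0 ≤ s₂) (ht₁ : 0 ≤ t₁) (ht₂ : 0 ≤ t₂) (hW₁ : 0 ≤ W₁) (hW₂ : 0 ≤ W₂)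
    (hR₁ : q * s₁ ≤ R₁) (hR₂ : R₂ ≤ q * s₂) (hW₂q : W₂ ≤ q * t₂)
    (hst : s₂ * t₁ ≤ s₁ * t₂) (hWt : W₂ * t₁ ≤ W₁ * t₂) :
    (R₂ + W₂) * (s₁ + t₁) ≤ (R₁ + W₁) * (s₂ + t₂) := by
  have hRs : R₂ * s₁ ≤ R₁ * s₂ := by nlinarith
  have hcross : W₂ * s₁ ≤ W₁ * s₂ + q * (s₁ * t₂ - s₂ * t₁) := by
    rcases ht₂.eq_or_lt with rfl | ht₂
    · have hW₂0 : W₂ = 0 := by linarith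
      have hst0 : s₂ * t₁ = 0 := by nlinarith
      rw [hW₂0, hst0]
      nlinarith
    · refine le_of_mul_le_mul_left ?_ ht₂
      nlinarith [mul_nonneg hs₂ (sub_nonneg.2 hWt),
        mul_nonneg (sub_nonneg.2 hW₂q) (sub_nonneg.2 hst)]
  nlinarith

section ConcaveDeriv

variable {f : ℝ → ℝ} {S : Set ℝ} {x y f' : ℝ}

theorem ConcaveOn.sub_le_mul_of_hasDerivWithinAt (hf : ConcaveOn ℝ S f) (hx : x ∈ S) (hy : y ∈ S)
    (hxy : x ≤ y) (hf' : HasDerivWithinAt f f' S x) : f y - f x ≤ f' * (y - x) := by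
  rcases hxy.eq_or_lt with rfl | hxy
  · simp
  have := hf.slope_le_of_hasDerivWithinAt hx hy hxy hf'
  rwa [slope_def_field, div_le_iff₀ (sub_pos.2 hxy)] at this

theorem ConcaveOn.mul_le_sub_of_hasDerivWithinAt (hf : ConcaveOn ℝ S f) (hx : x ∈ S) (hy : y ∈ S)
    (hxy : x ≤ y) (hf' : HasDerivWithinAt f f' S y) : f' * (y - x) ≤ f y - f x := by
  rcases hxy.eq_or_lt with rfl | hxy
  · simp
  have := hf.le_slope_of_hasDerivWithinAt hx hy hxy hf'
  rwa [slope_def_field, le_div_iff₀ (sub_pos.2 hxy)] at this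

theorem ConcaveOn.nonneg_of_hasDerivWithinAt (hf : ConcaveOn ℝ S f) (hf_mono : MonotoneOn f S)
    (hx : x ∈ S) (hy : y ∈ S) (hxy : x < y) (hf' : HasDerivWithinAt f f' S x) : 0 ≤ f' := by
  have h := hf.sub_le_mul_of_hasDerivWithinAt hx hy hxy.le hf'
  have hmono := hf_mono hx hy hxy.le
  exact le_of_mul_le_mul_right (by linarith) (sub_pos.2 hxy)

theorem ConcaveOn.antitoneOn_of_hasDerivWithinAt {f' : ℝ → ℝ} (hf : ConcaveOn ℝ S f)
    (hf' : ∀ x ∈ S, HasDerivWithinAt f (f' x) S x) : AntitoneOn f' S := by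
  intro x hx y hy hxy
  rcases hxy.eq_or_lt with rfl | hxy
  · rfl
  have h₁ := hf.mul_le_sub_of_hasDerivWithinAt hx hy hxy.le (hf' y hy)
  have h₂ := hf.sub_le_mul_of_hasDerivWithinAt hx hy hxy.le (hf' x hx)
  exact le_of_mul_le_mul_right (h₁.trans h₂) (sub_pos.2 hxy)

end ConcaveDeriv

structure IsNormalPolicy (c : ℝ) (σ : ℝ → ℝ) : Prop where
  mem_Icc : ∀ x ∈ Icc 0 c, σ x ∈ Icc 0 x
  monotoneOn : MonotoneOn σ (Icc 0 c)
  concaveOn : ConcaveOn ℝ (Icc 0 c) σ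

theorem mapsTo_sub_of_mem_Icc {c : ℝ} {σ : ℝ → ℝ} (hσ : ∀ x ∈ Icc 0 c, σ x ∈ Icc 0 x) :
    MapsTo (fun x => x - σ x) (Icc 0 c) (Icc 0 c) :=
  fun x hx => ⟨sub_nonneg.2 (hσ x hx).2, by linarith [(hσ x hx).1, hx.2]⟩

namespace IsNormalPolicy

variable {c : ℝ} {σ : ℝ → ℝ}

theorem nonneg (hσ : IsNormalPolicy c σ) {x : ℝ} (hx : x ∈ Icc 0 c) : 0 ≤ σ x :=
  (hσ.mem_Icc x hx).1

theorem mapsTo_sub (hσ : IsNormalPolicy c σ) : MapsTo (fun x => x - σ x) (Icc 0 c) (Icc 0 c) :=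
  mapsTo_sub_of_mem_Icc hσ.mem_Icc

/-- The slopes of the concave `σ` are at most that of its chord from the origin, `σ x / x ≤ 1`. -/
theorem sub_le_sub (hσ : IsNormalPolicy c σ) {x y : ℝ} (hx : x ∈ Icc 0 c) (hy : y ∈ Icc 0 c)
    (hxy : x ≤ y) : σ y - σ x ≤ y - x := by
  have h0 : (0 : ℝ) ∈ Icc 0 c := ⟨le_rfl, hx.1.trans hx.2⟩
  have hσ0 : σ 0 = 0 := le_antisymm (hσ.mem_Icc 0 h0).2 (hσ.nonneg h0)
  have hchord := hσ.concaveOn.sub_mul_sub_le h0 hy hx.1 hxy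
  rw [hσ0, sub_zero, sub_zero] at hchord
  rcases hx.1.eq_or_lt with rfl | hx0
  · linarith [(hσ.mem_Icc y hy).2]
  refine le_of_mul_le_mul_left ?_ hx0
  nlinarith [(hσ.mem_Icc x hx).2]

theorem monotoneOn_sub (hσ : IsNormalPolicy c σ) : MonotoneOn (fun x => x - σ x) (Icc 0 c) :=
  fun x hx y hy hxy => by linarith [hσ.sub_le_sub hx hy hxy]

theorem continuousOn (hσ : IsNormalPolicy c σ) : ContinuousOn σ (Icc 0 c) := by
  refine (LipschitzOnWith.of_dist_le_mul fun x hx y hy => ?_).continuousOn (K := 1)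
  rw [NNReal.coe_one, one_mul, Real.dist_eq, Real.dist_eq]
  rcases le_total x y with hxy | hxy
  · rw [abs_sub_comm, abs_of_nonneg (sub_nonneg.2 (hσ.monotoneOn hx hy hxy)), abs_sub_comm,
      abs_of_nonneg (sub_nonneg.2 hxy)]
    exact hσ.sub_le_sub hx hy hxy
  · rw [abs_of_nonneg (sub_nonneg.2 (hσ.monotoneOn hy hx hxy)), abs_of_nonneg (sub_nonneg.2 hxy)]
    exact hσ.sub_le_sub hy hx hxy

theorem congr (hσ : IsNormalPolicy c σ) {σ' : ℝ → ℝ} (h : EqOn σ σ' (Icc 0 c)) :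
    IsNormalPolicy c σ' where
  mem_Icc x hx := h hx ▸ hσ.mem_Icc x hx
  monotoneOn := hσ.monotoneOn.congr h
  concaveOn := hσ.concaveOn.congr h

theorem exists_continuous_extension (hσ : IsNormalPolicy c σ) (hc : 0 ≤ c) :
    ∃ σ' : ℝ → ℝ, EqOn σ σ' (Icc 0 c) ∧ Continuous σ' ∧ ∀ x, σ' x ∈ Icc 0 c :=
  ⟨fun x => σ (projIcc 0 c hc x), fun x hx => by simp [projIcc_of_mem hc hx],
    hσ.continuousOn.comp_continuous (continuous_subtype_val.comp continuous_projIcc)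
      fun x => (projIcc 0 c hc x).2,
    fun x => ⟨hσ.nonneg (projIcc 0 c hc x).2,
      (hσ.mem_Icc _ (projIcc 0 c hc x).2).2.trans (projIcc 0 c hc x).2.2⟩⟩

end IsNormalPolicy

section Density

variable {D s : Set ℝ} {W : ℝ → ℝ}

theorem nonneg_of_dense_of_continuousOn (hD : Dense D) {f : ℝ → ℝ} {u v : ℝ}
    (huv : u < v) (hf : ContinuousOn f (Icc u v)) (hfD : ∀ a ∈ Ioo u v, a ∈ D → 0 ≤ f a) :
    ∀ y ∈ Icc u v, 0 ≤ f y := by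
  have hclosed : IsClosed (Icc u v ∩ f ⁻¹' Ici 0) :=
    hf.preimage_isClosed_of_isClosed isClosed_Icc isClosed_Ici
  have hsub : Ioo u v ∩ D ⊆ Icc u v ∩ f ⁻¹' Ici 0 :=
    fun a ha => ⟨Ioo_subset_Icc_self ha.1, hfD a ha.1 ha.2⟩
  intro y hy
  rw [← closure_Ioo huv.ne] at hy
  exact (hclosed.closure_subset_iff.2 hsub
    (closure_minimal (hD.open_subset_closure_inter isOpen_Ioo) isClosed_closure hy)).2

theorem sub_le_mul_of_dense (hD : Dense D) (hs : Convex ℝ s) (hW : ContinuousOn W s)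
    {g : ℝ → ℝ} (hg : AntitoneOn g s)
    (hgood : ∀ a ∈ s, a ∈ D → ∀ v ∈ s, a ≤ v → W v - W a ≤ g a * (v - a))
    {u v : ℝ} (hu : u ∈ s) (hv : v ∈ s) (huv : u ≤ v) : W v - W u ≤ g u * (v - u) := by
  rcases huv.eq_or_lt with rfl | huv
  · simp
  have hIcc : Icc u v ⊆ s := hs.ordConnected.out hu hv
  have key := nonneg_of_dense_of_continuousOn hD huv
    (f := fun a => g u * (v - a) - (W v - W a))
    ((continuousOn_const.mul (continuousOn_const.sub continuousOn_id)).sub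
      (continuousOn_const.sub (hW.mono hIcc)))
    (fun a ha haD => by
      have has : a ∈ s := hIcc (Ioo_subset_Icc_self ha)
      have h₁ := hgood a has haD v hv ha.2.le
      have h₂ : g a * (v - a) ≤ g u * (v - a) :=
        mul_le_mul_of_nonneg_right (hg hu has ha.1.le) (sub_nonneg.2 ha.2.le)
      linarith)
    u (left_mem_Icc.2 huv.le)
  linarith

theorem concaveOn_of_dense (hD : Dense D) (hs : Convex ℝ s) (hW : ContinuousOn W s)
    (hgood : ∀ ⦃a b d⦄, a ∈ s → d ∈ s → a ≤ b → b ≤ d → b ∈ D →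
      (W d - W b) * (b - a) ≤ (W b - W a) * (d - b)) :
    ConcaveOn ℝ s W := by
  refine concaveOn_of_sub_mul_sub_le hs fun x y z hx hz hxy hyz => ?_
  have hIcc : Icc x z ⊆ s := hs.ordConnected.out hx hz
  have key := nonneg_of_dense_of_continuousOn hD (hxy.trans hyz)
    (f := fun b => (W b - W x) * (z - b) - (W z - W b) * (b - x))
    (((hW.mono hIcc).sub continuousOn_const).mul (continuousOn_const.sub continuousOn_id) |>.sub
      ((continuousOn_const.sub (hW.mono hIcc)).mul (continuousOn_id.sub continuousOn_const)))
    (fun b hb hbD => by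
      have := hgood hx hz hb.1.le hb.2.le hbD
      linarith)
    y ⟨hxy.le, hyz.le⟩
  linarith

end Density

/-- The expected reward collected in `m` slots from the battery level `b` reached just after an
arrival, under i.i.d. `B̃_p` arrivals: after spending `σ b`, an arrival `c` (probability `p`)
fills the battery, while an arrival `0` leaves `b - σ b`. -/
noncomputable def bernValue (r σ : ℝ → ℝ) (c p : ℝ) : ℕ → ℝ → ℝ
  | 0, _ => 0
  | m + 1, b => r (σ b) + p * bernValue r σ c p m c + (1 - p) * bernValue r σ c p m (b - σ b)

section BernValue

variable {r r' σ : ℝ → ℝ} {c p : ℝ}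

theorem bernValue_succ_sub (m : ℕ) (x y : ℝ) :
    bernValue r σ c p (m + 1) y - bernValue r σ c p (m + 1) x =
      r (σ y) - r (σ x) +
        (1 - p) * (bernValue r σ c p m (y - σ y) - bernValue r σ c p m (x - σ x)) := by
  simp only [bernValue]
  ring

theorem monotoneOn_bernValue (hr : MonotoneOn r (Ici 0)) (hσ : IsNormalPolicy c σ) (hp : p ≤ 1)
    (m : ℕ) : MonotoneOn (bernValue r σ c p m) (Icc 0 c) := by
  induction m with
  | zero => exact monotoneOn_const
  | succ m ih =>
    intro x hx y hy hxy
    have hrσ : r (σ x) ≤ r (σ y) := hr (hσ.nonneg hx) (hσ.nonneg hy) (hσ.monotoneOn hx hy hxy)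
    have hV := ih (hσ.mapsTo_sub hx) (hσ.mapsTo_sub hy) (hσ.monotoneOn_sub hx hy hxy)
    have := bernValue_succ_sub (r := r) (σ := σ) (c := c) (p := p) m x y
    nlinarith

theorem continuousOn_bernValue (hr : ContinuousOn r (Ici 0)) (hσ : IsNormalPolicy c σ) (m : ℕ) :
    ContinuousOn (bernValue r σ c p m) (Icc 0 c) := by
  induction m with
  | zero => exact continuousOn_const
  | succ m ih =>
    have hrσ : ContinuousOn (fun b => r (σ b)) (Icc 0 c) :=
      hr.comp hσ.continuousOn fun b hb => hσ.nonneg hb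
    have hV : ContinuousOn (fun b => bernValue r σ c p m (b - σ b)) (Icc 0 c) :=
      ih.comp (continuousOn_id.sub hσ.continuousOn) hσ.mapsTo_sub
    exact (hrσ.add continuousOn_const).add (continuousOn_const.mul hV)

theorem dense_nonGreedy
    (hng : ∀ᵐ x ∂(volume.restrict (Icc 0 c)), (1 - p) * r' (σ (x - σ x)) ≤ r' (σ x)) :
    Dense {x | x ∈ Icc 0 c → (1 - p) * r' (σ (x - σ x)) ≤ r' (σ x)} :=
  Measure.dense_of_ae ((ae_restrict_iff' measurableSet_Icc).1 hng)

theorem bernValue_sub_le (hr_mono : MonotoneOn r (Ici 0)) (hr : ConcaveOn ℝ (Ici 0) r)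
    (hr' : ∀ x, 0 ≤ x → HasDerivWithinAt r (r' x) (Ici 0) x) (hσ : IsNormalPolicy c σ) (hp : p ≤ 1)
    (hng : ∀ᵐ x ∂(volume.restrict (Icc 0 c)), (1 - p) * r' (σ (x - σ x)) ≤ r' (σ x)) (m : ℕ)
    {u v : ℝ} (hu : u ∈ Icc 0 c) (hv : v ∈ Icc 0 c) (huv : u ≤ v) :
    bernValue r σ c p m v - bernValue r σ c p m u ≤ r' (σ u) * (v - u) := by
  induction m generalizing u v with
  | zero =>
    have hσu : (0 : ℝ) ≤ σ u := hσ.nonneg hu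
    have hr'σu : 0 ≤ r' (σ u) := hr.nonneg_of_hasDerivWithinAt hr_mono hσu
      (by simp only [mem_Ici]; linarith) (lt_add_one _) (hr' _ hσu)
    simpa only [bernValue, sub_self] using mul_nonneg hr'σu (sub_nonneg.2 huv)
  | succ m ih =>
    have hr'σ : AntitoneOn (fun b => r' (σ b)) (Icc 0 c) := fun a ha b hb hab =>
      hr.antitoneOn_of_hasDerivWithinAt (fun x hx => hr' x hx) (hσ.nonneg ha) (hσ.nonneg hb)
        (hσ.monotoneOn ha hb hab)
    refine sub_le_mul_of_dense (dense_nonGreedy hng) (convex_Icc 0 c)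
      (continuousOn_bernValue (fun x hx => (hr' x hx).continuousWithinAt) hσ (m + 1)) hr'σ
      (fun a ha hgood v hv hav => ?_) hu hv huv
    have hσav := hσ.monotoneOn ha hv hav
    have hτav := hσ.monotoneOn_sub ha hv hav
    have hrσ : r (σ v) - r (σ a) ≤ r' (σ a) * (σ v - σ a) :=
      hr.sub_le_mul_of_hasDerivWithinAt (hσ.nonneg ha) (hσ.nonneg hv) hσav
        (hr' _ (hσ.nonneg ha))
    have hV := ih (hσ.mapsTo_sub ha) (hσ.mapsTo_sub hv) hτav
    have hgood' : (1 - p) * r' (σ (a - σ a)) * ((v - σ v) - (a - σ a))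
        ≤ r' (σ a) * ((v - σ v) - (a - σ a)) :=
      mul_le_mul_of_nonneg_right (hgood ha) (sub_nonneg.2 hτav)
    rw [bernValue_succ_sub]
    nlinarith [mul_le_mul_of_nonneg_left hV (sub_nonneg.2 hp)]

theorem concaveOn_bernValue (hr_mono : MonotoneOn r (Ici 0)) (hr : ConcaveOn ℝ (Ici 0) r)
    (hr' : ∀ x, 0 ≤ x → HasDerivWithinAt r (r' x) (Ici 0) x) (hσ : IsNormalPolicy c σ) (hp : p ≤ 1)
    (hng : ∀ᵐ x ∂(volume.restrict (Icc 0 c)), (1 - p) * r' (σ (x - σ x)) ≤ r' (σ x)) (m : ℕ) :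
    ConcaveOn ℝ (Icc 0 c) (bernValue r σ c p m) := by
  induction m with
  | zero => exact concaveOn_const _ (convex_Icc 0 c)
  | succ m ih =>
    refine concaveOn_of_dense (dense_nonGreedy hng) (convex_Icc 0 c)
      (continuousOn_bernValue (fun x hx => (hr' x hx).continuousWithinAt) hσ (m + 1))
      fun a b d ha hd hab hbd hgood => ?_
    have hb : b ∈ Icc 0 c := ⟨ha.1.trans hab, hbd.trans hd.2⟩
    have hσab := hσ.monotoneOn ha hb hab
    have hσbd := hσ.monotoneOn hb hd hbd
    have hτab := hσ.monotoneOn_sub ha hb hab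
    have hτbd := hσ.monotoneOn_sub hb hd hbd
    set V := bernValue r σ c p m
    have hW₂ : (1 - p) * (V (d - σ d) - V (b - σ b)) ≤ r' (σ b) * ((d - σ d) - (b - σ b)) := by
      have hV := bernValue_sub_le hr_mono hr hr' hσ hp hng m (hσ.mapsTo_sub hb)
        (hσ.mapsTo_sub hd) hτbd
      nlinarith [mul_le_mul_of_nonneg_left hV (sub_nonneg.2 hp),
        mul_le_mul_of_nonneg_right (hgood hb) (sub_nonneg.2 hτbd)]
    have hσconc := hσ.concaveOn.sub_mul_sub_le ha hd hab hbd
    have hVconc := ih.sub_mul_sub_le (hσ.mapsTo_sub ha) (hσ.mapsTo_sub hd) hτab hτbd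
    have key := add_mul_add_le_add_mul_add (sub_nonneg.2 hσab) (sub_nonneg.2 hσbd)
      (sub_nonneg.2 hτab) (sub_nonneg.2 hτbd)
      (mul_nonneg (sub_nonneg.2 hp) (sub_nonneg.2
        (monotoneOn_bernValue hr_mono hσ hp m (hσ.mapsTo_sub ha) (hσ.mapsTo_sub hb) hτab)))
      (mul_nonneg (sub_nonneg.2 hp) (sub_nonneg.2
        (monotoneOn_bernValue hr_mono hσ hp m (hσ.mapsTo_sub hb) (hσ.mapsTo_sub hd) hτbd)))
      (hr.mul_le_sub_of_hasDerivWithinAt (hσ.nonneg ha) (hσ.nonneg hb) hσab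
        (hr' _ (hσ.nonneg hb)))
      (hr.sub_le_mul_of_hasDerivWithinAt (hσ.nonneg hb) (hσ.nonneg hd) hσbd
        (hr' _ (hσ.nonneg hb)))
      hW₂ (by nlinarith) (by nlinarith [mul_le_mul_of_nonneg_left hVconc (sub_nonneg.2 hp)])
    rw [bernValue_succ_sub, bernValue_succ_sub]
    convert key using 2 <;> ring

end BernValue

theorem ConcaveOn.add_mul_div_le_apply_min_add {W : ℝ → ℝ} {c x y : ℝ} (hc : 0 < c)
    (hW : ConcaveOn ℝ (Icc 0 c) W) (hWm : MonotoneOn W (Icc 0 c)) (hx : x ∈ Icc 0 c)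
    (hy : y ∈ Icc 0 c) : W x + y * ((W c - W x) / c) ≤ W (min (x + y) c) := by
  have hcc : c ∈ Icc 0 c := right_mem_Icc.2 hc.le
  have hWxc := hWm hx hcc hx.2
  rw [mul_div_assoc', add_div' _ _ _ hc.ne', div_le_iff₀ hc]
  rcases le_total c (x + y) with hxy | hxy
  · rw [min_eq_right hxy]
    nlinarith [hy.2]
  · rw [min_eq_left hxy]
    have hxy' : x + y ∈ Icc 0 c := ⟨by linarith [hx.1, hy.1], hxy⟩
    have hconc := hW.sub_mul_sub_le hx hcc (by linarith [hy.1]) hxy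
    have hmono := hWm hx hxy' (by linarith [hy.1])
    nlinarith [mul_nonneg hx.1 (sub_nonneg.2 hmono)]

theorem ConcaveOn.one_sub_mul_add_mul_le_integral {W f : ℝ → ℝ} {c p x : ℝ} (hc : 0 < c)
    (hW : ConcaveOn ℝ (Icc 0 c) W) (hWm : MonotoneOn W (Icc 0 c)) {Q : Measure ℝ}
    [IsProbabilityMeasure Q] (hQ : ∀ᵐ y ∂Q, y ∈ Icc 0 c) (hQmean : ∫ y, y ∂Q = p * c)
    (hx : x ∈ Icc 0 c) (hf : Integrable f Q) (hfW : ∀ᵐ y ∂Q, W (min (x + y) c) ≤ f y) :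
    (1 - p) * W x + p * W c ≤ ∫ y, f y ∂Q := by
  have hid : Integrable (fun y => y) Q :=
    .of_bound measurable_id.aestronglyMeasurable c <| hQ.mono fun y hy => by
      rw [Real.norm_eq_abs, abs_of_nonneg hy.1]
      exact hy.2
  calc (1 - p) * W x + p * W c = ∫ y, (W x + y * ((W c - W x) / c)) ∂Q := by
        rw [integral_add (integrable_const _) (hid.mul_const _), integral_const,
          integral_mul_const, hQmean, probReal_univ, one_smul]
        field_simp
        ring
    _ ≤ ∫ y, f y ∂Q :=
        integral_mono_ae ((integrable_const _).add (hid.mul_const _)) hf <| by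
          filter_upwards [hQ, hfW] with y hy hfy
          exact (hW.add_mul_div_le_apply_min_add hc hWm hx hy).trans hfy

section Dynamics

variable {r σ : ℝ → ℝ} {c : ℝ}

theorem battery_succ_shift (x : ℝ) (xs : ℕ → ℝ) (t : ℕ) :
    battery c σ x xs (t + 1) =
      battery c σ (battery c σ x xs 0 - σ (battery c σ x xs 0)) (fun i => xs (i + 1)) t := by
  induction t with
  | zero => rfl
  | succ t ih =>
    show min (battery c σ x xs (t + 1) - σ (battery c σ x xs (t + 1)) + xs (t + 1 + 1)) c = _
    rw [ih]
    rfl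

theorem totalReward_succ (x : ℝ) (xs : ℕ → ℝ) (n : ℕ) :
    totalReward r c σ x xs (n + 1) =
      r (σ (min (x + xs 0) c)) +
        totalReward r c σ (min (x + xs 0) c - σ (min (x + xs 0) c)) (fun i => xs (i + 1)) n := by
  simp only [totalReward, Finset.sum_range_succ', battery_succ_shift]
  rw [add_comm]
  rfl

theorem battery_mem_Icc (hσ : ∀ b ∈ Icc 0 c, σ b ∈ Icc 0 b) {x : ℝ} (hx : x ∈ Icc 0 c)
    {xs : ℕ → ℝ} (hxs : ∀ t, 0 ≤ xs t) (t : ℕ) : battery c σ x xs t ∈ Icc 0 c := by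
  induction t with
  | zero => exact ⟨le_min (add_nonneg hx.1 (hxs 0)) (hx.1.trans hx.2), min_le_right _ _⟩
  | succ t ih =>
    have := hσ _ ih
    exact ⟨le_min (by linarith [hxs (t + 1), this.2]) (ih.1.trans ih.2), min_le_right _ _⟩

theorem totalReward_congr {σ' : ℝ → ℝ} (hσ : ∀ b ∈ Icc 0 c, σ b ∈ Icc 0 b)
    (h : EqOn σ σ' (Icc 0 c)) {x : ℝ} (hx : x ∈ Icc 0 c) {xs : ℕ → ℝ} (hxs : ∀ t, 0 ≤ xs t)
    (n : ℕ) : totalReward r c σ x xs n = totalReward r c σ' x xs n := by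
  have hb : ∀ t, battery c σ x xs t = battery c σ' x xs t := by
    intro t
    induction t with
    | zero => rfl
    | succ t ih => rw [battery, battery, ← ih, h (battery_mem_Icc hσ hx hxs t)]
  exact Finset.sum_congr rfl fun t _ => by rw [← hb, h (battery_mem_Icc hσ hx hxs t)]

theorem abs_totalReward_le {M : ℝ} (hM : ∀ b, |r (σ b)| ≤ M) (x : ℝ) (xs : ℕ → ℝ) (n : ℕ) :
    |totalReward r c σ x xs n| ≤ n * M := by
  unfold totalReward
  refine (Finset.abs_sum_le_sum_abs _ _).trans ?_
  simpa using Finset.sum_le_sum fun t (_ : t ∈ Finset.range n) => hM (battery c σ x xs t)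

end Dynamics

theorem integral_pi_fin_succ {α E : Type*} [MeasurableSpace α] [NormedAddCommGroup E]
    [NormedSpace ℝ E] (μ : Measure α) [SigmaFinite μ] {n : ℕ} {f : (Fin (n + 1) → α) → E}
    (hf : Integrable f (Measure.pi fun _ => μ)) :
    ∫ x, f x ∂(Measure.pi fun _ => μ) = ∫ y, ∫ z, f (Fin.cons y z) ∂(Measure.pi fun _ => μ) ∂μ := by
  have e := (measurePreserving_piFinSuccAbove (fun _ : Fin (n + 1) => μ) 0).symm
  rw [← e.integral_comp', integral_prod (fun q => f ((MeasurableEquiv.piFinSuccAbove _ 0).symm q))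
    ((e.integrable_comp_emb (MeasurableEquiv.measurableEmbedding _)).2 hf)]
  simp only [MeasurableEquiv.piFinSuccAbove_symm_apply, Fin.insertNthEquiv, Equiv.coe_fn_mk,
    Fin.insertNth_zero']

def extendByZero {n : ℕ} (xs : Fin n → ℝ) (t : ℕ) : ℝ :=
  if h : t < n then xs ⟨t, h⟩ else 0

noncomputable def expectedReward (r : ℝ → ℝ) (c : ℝ) (σ : ℝ → ℝ) (μ : Measure ℝ) (x : ℝ)
    (n : ℕ) : ℝ :=
  ∫ xs : Fin n → ℝ, totalReward r c σ x (extendByZero xs) n ∂(Measure.pi fun _ => μ)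

section ExpectedReward

variable {r σ : ℝ → ℝ} {c : ℝ}

theorem totalReward_extendByZero_cons {n : ℕ} (x y : ℝ) (z : Fin n → ℝ) :
    totalReward r c σ x (extendByZero (Fin.cons y z : Fin (n + 1) → ℝ)) (n + 1) =
      r (σ (min (x + y) c)) +
        totalReward r c σ (min (x + y) c - σ (min (x + y) c)) (extendByZero z) n := by
  rw [totalReward_succ]
  congr
  funext t
  simp only [extendByZero, Nat.add_lt_add_iff_right]
  split_ifs <;> rfl

theorem measurable_totalReward_extendByZero (hσ : Measurable σ) (hrσ : Measurable fun b => r (σ b))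
    (n : ℕ) : Measurable fun q : ℝ × (Fin n → ℝ) => totalReward r c σ q.1 (extendByZero q.2) n := by
  have hxs : ∀ t, Measurable fun q : ℝ × (Fin n → ℝ) => extendByZero q.2 t := fun t => by
    unfold extendByZero
    split_ifs <;> fun_prop
  have hb : ∀ t, Measurable fun q : ℝ × (Fin n → ℝ) => battery c σ q.1 (extendByZero q.2) t := by
    intro t
    induction t with
    | zero => exact (measurable_fst.add (hxs 0)).min measurable_const
    | succ t ih => exact ((ih.sub (hσ.comp ih)).add (hxs (t + 1))).min measurable_const
  exact Finset.measurable_sum _ fun t _ => hrσ.comp (hb t)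

variable {μ : Measure ℝ} [IsProbabilityMeasure μ] {M : ℝ}

theorem integrable_totalReward_extendByZero (hσ : Measurable σ)
    (hrσ : Measurable fun b => r (σ b)) (hM : ∀ b, |r (σ b)| ≤ M) (x : ℝ) (n : ℕ) :
    Integrable (fun xs : Fin n → ℝ => totalReward r c σ x (extendByZero xs) n)
      (Measure.pi fun _ => μ) :=
  .of_bound ((measurable_totalReward_extendByZero hσ hrσ n).comp
      (measurable_const.prodMk measurable_id)).aestronglyMeasurable (n * M)
    (ae_of_all _ fun xs => abs_totalReward_le hM x (extendByZero xs) n)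

theorem measurable_expectedReward (hσ : Measurable σ) (hrσ : Measurable fun b => r (σ b))
    (n : ℕ) : Measurable fun x => expectedReward r c σ μ x n :=
  (measurable_totalReward_extendByZero hσ hrσ n).stronglyMeasurable.integral_prod_right'.measurable

theorem abs_expectedReward_le (hM : ∀ b, |r (σ b)| ≤ M) (x : ℝ) (n : ℕ) :
    |expectedReward r c σ μ x n| ≤ n * M := by
  rw [expectedReward]
  simpa using norm_integral_le_of_norm_le_const (μ := Measure.pi fun _ : Fin n => μ)
    (ae_of_all _ fun xs => (Real.norm_eq_abs _).trans_le
      (abs_totalReward_le (c := c) hM x (extendByZero xs) n))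

theorem expectedReward_succ (hσ : Measurable σ) (hrσ : Measurable fun b => r (σ b))
    (hM : ∀ b, |r (σ b)| ≤ M) (x : ℝ) (n : ℕ) :
    expectedReward r c σ μ x (n + 1) =
      ∫ y, (r (σ (min (x + y) c)) +
        expectedReward r c σ μ (min (x + y) c - σ (min (x + y) c)) n) ∂μ := by
  rw [expectedReward, integral_pi_fin_succ μ (integrable_totalReward_extendByZero hσ hrσ hM x _)]
  refine integral_congr_ae (ae_of_all _ fun y => ?_)
  simp only [totalReward_extendByZero_cons]
  rw [integral_add (integrable_const _) (integrable_totalReward_extendByZero hσ hrσ hM _ n),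
    integral_const, probReal_univ, one_smul, expectedReward]

end ExpectedReward

section Bern

variable {c p : ℝ}

theorem isProbabilityMeasure_bern (hp : p ∈ Icc 0 1) : IsProbabilityMeasure (bern c p) := by
  constructor
  simp [bern, ← ENNReal.ofReal_add (sub_nonneg.2 hp.2) hp.1]

theorem ae_bern_mem_Icc (hc : 0 ≤ c) : ∀ᵐ y ∂bern c p, y ∈ Icc 0 c := by
  rw [bern, ae_add_measure_iff]
  exact ⟨Measure.ae_smul_measure ((ae_dirac_iff measurableSet_Icc).2 ⟨le_rfl, hc⟩) _,
    Measure.ae_smul_measure ((ae_dirac_iff measurableSet_Icc).2 ⟨hc, le_rfl⟩) _⟩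

theorem integral_bern (hp : p ∈ Icc 0 1) (f : ℝ → ℝ) :
    ∫ y, f y ∂bern c p = (1 - p) * f 0 + p * f c := by
  have hdirac : ∀ a : ℝ, Integrable f (Measure.dirac a) := fun a => integrable_dirac enorm_lt_top
  rw [bern, integral_add_measure ((hdirac 0).smul_measure ENNReal.ofReal_ne_top)
      ((hdirac c).smul_measure ENNReal.ofReal_ne_top), integral_smul_measure,
    integral_smul_measure, integral_dirac, integral_dirac, ENNReal.toReal_ofReal hp.1,
    ENNReal.toReal_ofReal (sub_nonneg.2 hp.2), smul_eq_mul, smul_eq_mul]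

end Bern

section Comparison

variable {r r' σ : ℝ → ℝ} {c p : ℝ}

theorem expectedReward_bern {M : ℝ} (hσ : ∀ x ∈ Icc 0 c, σ x ∈ Icc 0 x) (hσm : Measurable σ)
    (hrσ : Measurable fun b => r (σ b)) (hM : ∀ b, |r (σ b)| ≤ M) (hp : p ∈ Icc 0 1) (n : ℕ)
    {x : ℝ} (hx : x ∈ Icc 0 c) :
    expectedReward r c σ (bern c p) x n =
      (1 - p) * bernValue r σ c p n x + p * bernValue r σ c p n c := by
  have := isProbabilityMeasure_bern (c := c) hp
  induction n generalizing x with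
  | zero => simp [expectedReward, totalReward, bernValue]
  | succ n ih =>
    have hc : c ∈ Icc 0 c := right_mem_Icc.2 (hx.1.trans hx.2)
    rw [expectedReward_succ hσm hrσ hM, integral_bern hp, add_zero, min_eq_left hx.2,
      min_eq_right (le_add_of_nonneg_left hx.1), ih (mapsTo_sub_of_mem_Icc hσ hx),
      ih (mapsTo_sub_of_mem_Icc hσ hc)]
    simp only [bernValue]
    ring

theorem expectedReward_congr {σ' : ℝ → ℝ} (hσ : ∀ x ∈ Icc 0 c, σ x ∈ Icc 0 x)
    (h : EqOn σ σ' (Icc 0 c)) {μ : Measure ℝ} [SigmaFinite μ] (hμ : ∀ᵐ y ∂μ, 0 ≤ y) {x : ℝ}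
    (hx : x ∈ Icc 0 c) (n : ℕ) : expectedReward r c σ μ x n = expectedReward r c σ' μ x n := by
  have hxs : ∀ᵐ xs ∂(Measure.pi fun _ : Fin n => μ), ∀ i, 0 ≤ xs i :=
    ae_all_iff.2 fun i => Measure.tendsto_eval_ae_ae.eventually hμ
  refine integral_congr_ae (hxs.mono fun xs hxs => totalReward_congr hσ h hx (fun t => ?_) n)
  unfold extendByZero
  split_ifs
  exacts [hxs _, le_rfl]

theorem expectedReward_bern_le (hr_nonneg : ∀ x, 0 ≤ x → 0 ≤ r x) (hr_mono : MonotoneOn r (Ici 0))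
    (hr : ConcaveOn ℝ (Ici 0) r) (hr' : ∀ x, 0 ≤ x → HasDerivWithinAt r (r' x) (Ici 0) x)
    (hc : 0 < c) (hp : p ∈ Icc 0 1) (hσ : IsNormalPolicy c σ) (hσc : Continuous σ)
    (hσ_mem : ∀ x, σ x ∈ Icc 0 c)
    (hng : ∀ᵐ x ∂(volume.restrict (Icc 0 c)), (1 - p) * r' (σ (x - σ x)) ≤ r' (σ x))
    {Q : Measure ℝ} [IsProbabilityMeasure Q] (hQ : ∀ᵐ y ∂Q, y ∈ Icc 0 c)
    (hQmean : ∫ y, y ∂Q = p * c) (n : ℕ) {x : ℝ} (hx : x ∈ Icc 0 c) :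
    expectedReward r c σ (bern c p) x n ≤ expectedReward r c σ Q x n := by
  have hrσ : Continuous fun b => r (σ b) :=
    ContinuousOn.comp_continuous (fun x hx => (hr' x hx).continuousWithinAt) hσc
      fun b => (hσ_mem b).1
  have hM : ∀ b, |r (σ b)| ≤ r c := fun b => by
    rw [abs_of_nonneg (hr_nonneg _ (hσ_mem b).1)]
    exact hr_mono (hσ_mem b).1 hc.le (hσ_mem b).2
  induction n generalizing x with
  | zero => simp [expectedReward, totalReward]
  | succ n ih =>
    have hb : Measurable fun y => min (x + y) c := by fun_prop
    have hint : Integrable (fun y => r (σ (min (x + y) c)) +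
        expectedReward r c σ Q (min (x + y) c - σ (min (x + y) c)) n) Q :=
      .of_bound ((hrσ.measurable.comp hb).add
          ((measurable_expectedReward hσc.measurable hrσ.measurable n).comp
            (hb.sub (hσc.measurable.comp hb)))).aestronglyMeasurable (r c + n * r c)
        (ae_of_all _ fun y =>
          (abs_add_le _ _).trans (add_le_add (hM _) (abs_expectedReward_le hM _ n)))
    rw [expectedReward_bern hσ.mem_Icc hσc.measurable hrσ.measurable hM hp (n + 1) hx,
      expectedReward_succ hσc.measurable hrσ.measurable hM]
    refine (concaveOn_bernValue hr_mono hr hr' hσ hp.2 hng (n + 1)).one_sub_mul_add_mul_le_integral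
      hc (monotoneOn_bernValue hr_mono hσ hp.2 (n + 1)) hQ hQmean hx hint ?_
    filter_upwards [hQ] with y hy
    have hτ := hσ.mapsTo_sub (⟨le_min (add_nonneg hx.1 hy.1) hc.le, min_le_right _ _⟩ :
      min (x + y) c ∈ Icc 0 c)
    calc bernValue r σ c p (n + 1) (min (x + y) c)
        = r (σ (min (x + y) c)) +
          expectedReward r c σ (bern c p) (min (x + y) c - σ (min (x + y) c)) n := by
          rw [expectedReward_bern hσ.mem_Icc hσc.measurable hrσ.measurable hM hp n hτ, bernValue]
          ring
      _ ≤ _ := add_le_add_right (ih hτ) _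

end Comparison

theorem bernoulli_least_favorable_general
    (r r' : ℝ → ℝ)
    (hr_nonneg : ∀ x : ℝ, 0 ≤ x → 0 ≤ r x)
    (hr_mono : MonotoneOn r (Ici (0 : ℝ)))
    (hr_concave : ConcaveOn ℝ (Ici (0 : ℝ)) r)
    (hr_deriv : ∀ x : ℝ, 0 ≤ x → HasDerivWithinAt r (r' x) (Ici (0 : ℝ)) x)
    (c : ℝ) (hc : 0 < c) (p : ℝ) (hp : p ∈ Ioo (0 : ℝ) 1)
    (σ : ℝ → ℝ)
    (hσ_pol : ∀ x ∈ Icc (0 : ℝ) c, 0 ≤ σ x ∧ σ x ≤ x)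
    (hσ_mono : MonotoneOn σ (Icc (0 : ℝ) c))
    (hσ_concave : ConcaveOn ℝ (Icc (0 : ℝ) c) σ)
    (hnongreedy : ∀ᵐ x ∂(volume.restrict (Icc (0 : ℝ) c)),
      (1 - p) * r' (σ (x - σ x)) ≤ r' (σ x))
    (Q : Measure ℝ) (hQ : IsProbabilityMeasure Q) (hQsupp : Q (Icc (0 : ℝ) c) = 1)
    (hQmean : ∫ x, x ∂Q = p * c)
    (x : ℝ) (hx : x ∈ Icc (0 : ℝ) c) (n : ℕ) :
    ∫ xs : Fin n → ℝ,
        totalReward r c σ x (fun t => if h : t < n then xs ⟨t, h⟩ else 0) n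
        ∂(Measure.pi fun _ : Fin n => bern c p) ≤
      ∫ xs : Fin n → ℝ,
        totalReward r c σ x (fun t => if h : t < n then xs ⟨t, h⟩ else 0) n
        ∂(Measure.pi fun _ : Fin n => Q) := by
  have hσ : IsNormalPolicy c σ := ⟨hσ_pol, hσ_mono, hσ_concave⟩
  obtain ⟨σ', hσσ', hσ'c, hσ'_mem⟩ := hσ.exists_continuous_extension hc.le
  have hng' : ∀ᵐ x ∂(volume.restrict (Icc 0 c)), (1 - p) * r' (σ' (x - σ' x)) ≤ r' (σ' x) := by
    filter_upwards [hnongreedy, ae_restrict_mem measurableSet_Icc] with x hng hx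
    rwa [← hσσ' hx, ← hσσ' (hσ.mapsTo_sub hx)]
  have hQ' : ∀ᵐ y ∂Q, y ∈ Icc 0 c :=
    (ae_iff_measure_eq measurableSet_Icc.nullMeasurableSet).2 (by rw [measure_univ]; exact hQsupp)
  have := isProbabilityMeasure_bern (c := c) (Ioo_subset_Icc_self hp)
  change expectedReward r c σ (bern c p) x n ≤ expectedReward r c σ Q x n
  rw [expectedReward_congr hσ_pol hσσ' ((ae_bern_mem_Icc hc.le).mono fun y hy => hy.1) hx,
    expectedReward_congr hσ_pol hσσ' (hQ'.mono fun y hy => hy.1) hx]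
  exact expectedReward_bern_le hr_nonneg hr_mono hr_concave hr_deriv hc (Ioo_subset_Icc_self hp)
    (hσ.congr hσσ') hσ'c hσ'_mem hng' hQ' hQmean n hx

/-- **Bernoulli is the least favorable distribution for normal non-greedy policies**
(Theorem 2). Let `r` be a reward function that is differentiable on `[0, ∞)` with
derivative `r'`, and let `σ` be a normal stationary policy on `[0, c]` such that
`r' (σ x) ≥ (1 - p) r' (σ (x - σ x))` for a.e. `x ∈ [0, c]`. Then for every probability
measure `Q` on `[0, c]` with mean `p c`, every initial battery level `x ∈ [0, c]`, and
every horizon `n ≥ 1`, the expected total reward under i.i.d. `B̃_p` arrivals is at most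
that under i.i.d. `Q` arrivals. -/
theorem bernoulli_least_favorable
    (r r' : ℝ → ℝ)
    (hr_zero : r 0 = 0)
    (hr_nonneg : ∀ x : ℝ, 0 ≤ x → 0 ≤ r x)
    (hr_mono : MonotoneOn r (Ici (0 : ℝ)))
    (hr_lip : ∃ K : NNReal, LipschitzOnWith K r (Ici (0 : ℝ)))
    (hr_concave : ConcaveOn ℝ (Ici (0 : ℝ)) r)
    (hr_deriv : ∀ x : ℝ, 0 ≤ x → HasDerivWithinAt r (r' x) (Ici (0 : ℝ)) x)
    (c : ℝ) (hc : 0 < c) (p : ℝ) (hp : p ∈ Ioo (0 : ℝ) 1)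
    (σ : ℝ → ℝ)
    (hσ_pol : ∀ x ∈ Icc (0 : ℝ) c, 0 ≤ σ x ∧ σ x ≤ x)
    (hσ_mono : MonotoneOn σ (Icc (0 : ℝ) c))
    (hσ_concave : ConcaveOn ℝ (Icc (0 : ℝ) c) σ)
    (hnongreedy : ∀ᵐ x ∂(volume.restrict (Icc (0 : ℝ) c)),
      (1 - p) * r' (σ (x - σ x)) ≤ r' (σ x))
    (Q : Measure ℝ) (hQ : IsProbabilityMeasure Q) (hQsupp : Q (Icc (0 : ℝ) c) = 1)
    (hQmean : ∫ x, x ∂Q = p * c)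
    (x : ℝ) (hx : x ∈ Icc (0 : ℝ) c) (n : ℕ) (hn : 1 ≤ n) :
    ∫ xs : Fin n → ℝ,
        totalReward r c σ x (fun t => if h : t < n then xs ⟨t, h⟩ else 0) n
        ∂(Measure.pi fun _ : Fin n => bern c p) ≤
      ∫ xs : Fin n → ℝ,
        totalReward r c σ x (fun t => if h : t < n then xs ⟨t, h⟩ else 0) n
        ∂(Measure.pi fun _ : Fin n => Q) :=
  bernoulli_least_favorable_general r r' hr_nonneg hr_mono hr_concave hr_deriv c hc p hp σ hσ_pol
    hσ_mono hσ_concave hnongreedy Q hQ hQsupp hQmean x hx n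
end

section
/- Let r be a reward function that is strictly concave and differentiable on [0,∞), so that its derivative r' is continuous and strictly decreasing with limit L := lim_{x→∞} r'(x) ≥ 0. Suppose there exists s with 1 < s and s·L < r'(0) such that the function κ_s, defined on [τ_s, ∞) by the relation r'(κ_s(x)) = s·r'(x) (where τ_s is the unique point with r'(τ_s) = r'(0)/s), is convex. Then r is strictly increasing on [0,∞), r' is continuous and strictly decreasing on [0,∞), and L = 0, i.e., r'(x) → 0 as x → ∞. -/
/-!
Strict concavity makes `r'` strictly decreasing, so `r' > L` on `[0, ∞)`, and by Darboux's
theorem a monotone derivative has no jumps, so `r'` is continuous. From `r' (κ x) = s * r' x > L`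
and `x → ∞` we get `s * L ≥ L`, i.e. `L ≥ 0`. If `L > 0`, then `r'` drops below `s * L` far out,
so `κ` is bounded above; a convex function bounded above on a half-line is antitone, whereas `κ`
is strictly increasing because `r'` is strictly decreasing. Hence `L = 0`, so `r' > 0` and `r` is
strictly increasing.
-/

open Set Filter Topology

theorem ConvexOn.antitoneOn_Ici_of_bddAbove {𝕜 : Type*} [Field 𝕜] [LinearOrder 𝕜]
    [IsStrictOrderedRing 𝕜] {a : 𝕜} {f : 𝕜 → 𝕜} (hf : ConvexOn 𝕜 (Ici a) f)
    (hbdd : BddAbove (f '' Ici a)) : AntitoneOn f (Ici a) := by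
  intro x hx y hy hxy
  by_contra! hlt
  obtain ⟨M, hM⟩ := hbdd
  have hxy' : x < y := hxy.lt_of_ne (by rintro rfl; exact hlt.false)
  set d := (f y - f x) / (y - x)
  have hd : 0 < d := div_pos (sub_pos.2 hlt) (sub_pos.2 hxy')
  -- beyond `y` the graph stays above the secant line through `x` and `y`
  set z := y + (M - f y) / d + 1
  have hyz : y < z := by
    have : 0 ≤ (M - f y) / d := div_nonneg (sub_nonneg.2 (hM (mem_image_of_mem f hy))) hd.le
    linarith
  have hz : z ∈ Ici a := le_trans hy hyz.le
  have hslope : d * (z - y) ≤ f z - f y :=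
    (le_div_iff₀ (sub_pos.2 hyz)).1 (hf.slope_mono_adjacent hx hz hxy' hyz)
  have hzy : d * (z - y) = M - f y + d := by
    simp only [z]
    field_simp
    ring
  linarith [hM (mem_image_of_mem f hz)]

theorem StrictMonoOn.continuousOn_Ici_of_ordConnected_image {α β : Type*} [LinearOrder α]
    [TopologicalSpace α] [OrderTopology α] [NoMaxOrder α] [LinearOrder β] [TopologicalSpace β]
    [OrderTopology β] [DenselyOrdered β] {a : α} {f : α → β} (hf : StrictMonoOn f (Ici a))
    (himg : (f '' Ici a).OrdConnected) : ContinuousOn f (Ici a) := by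
  intro x hx
  obtain ⟨y, hxy⟩ := exists_gt x
  have hy : y ∈ Ici a := le_trans hx hxy.le
  have hright : Icc (f x) (f y) ∈ 𝓝[≥] f x := Icc_mem_nhdsGE (hf hx hy hxy)
  rcases (mem_Ici.1 hx).eq_or_lt with rfl | hax
  · exact hf.continuousWithinAt_right_of_image_mem_nhdsWithin self_mem_nhdsWithin
      (mem_of_superset hright (himg.out (mem_image_of_mem f hx) (mem_image_of_mem f hy)))
  · have hnhds : Icc (f a) (f y) ∈ 𝓝 (f x) :=
      Icc_mem_nhds (hf self_mem_Ici hx hax) (hf hx hy hxy)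
    exact (hf.continuousAt_of_image_mem_nhds (Ici_mem_nhds hax)
      (mem_of_superset hnhds (himg.out (mem_image_of_mem f self_mem_Ici)
        (mem_image_of_mem f hy)))).continuousWithinAt

theorem StrictConcaveOn.strictAntiOn_of_hasDerivWithinAt {S : Set ℝ} {f f' : ℝ → ℝ}
    (hfc : StrictConcaveOn ℝ S f) (hf : ∀ x ∈ S, HasDerivWithinAt f (f' x) S x) :
    StrictAntiOn f' S := fun x hx y hy hxy =>
  (hfc.lt_slope_of_hasDerivWithinAt hx hy hxy (hf y hy)).trans
    (hfc.slope_lt_of_hasDerivWithinAt hx hy hxy (hf x hx))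

theorem ConcaveOn.strictMonoOn_of_hasDerivWithinAt_pos {S : Set ℝ} {f f' : ℝ → ℝ}
    (hfc : ConcaveOn ℝ S f) (hf : ∀ x ∈ S, HasDerivWithinAt f (f' x) S x)
    (hpos : ∀ x ∈ S, 0 < f' x) : StrictMonoOn f S := fun _ hx y hy hxy =>
  (slope_pos_iff_of_le hxy.le).1
    ((hpos y hy).trans_le (hfc.le_slope_of_hasDerivWithinAt hx hy hxy (hf y hy)))

theorem StrictAntiOn.lt_of_tendsto_atTop {α β : Type*} [LinearOrder α] [Nonempty α] [NoMaxOrder α]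
    [LinearOrder β] [TopologicalSpace β] [OrderClosedTopology β] {a : α} {f : α → β} {L : β}
    (hf : StrictAntiOn f (Ici a)) (hL : Tendsto f atTop (𝓝 L)) {x : α} (hx : x ∈ Ici a) :
    L < f x := by
  obtain ⟨y, hxy⟩ := exists_gt x
  have hy : y ∈ Ici a := le_trans hx hxy.le
  refine lt_of_le_of_lt (le_of_tendsto hL ?_) (hf hx hy hxy)
  filter_upwards [eventually_ge_atTop y] with z hz
  exact hf.antitoneOn hy (le_trans hy hz) hz

theorem StrictAntiOn.continuousOn_Ici_of_hasDerivWithinAt {a : ℝ} {f f' : ℝ → ℝ}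
    (hf' : StrictAntiOn f' (Ici a)) (hf : ∀ x ∈ Ici a, HasDerivWithinAt f (f' x) (Ici a) x) :
    ContinuousOn f' (Ici a) := by
  have hdarboux : ((fun x => -f' x) '' Ici a).OrdConnected :=
    ordConnected_Ici.image_hasDerivWithinAt fun x hx => (hf x hx).neg
  have hcont := hf'.neg.continuousOn_Ici_of_ordConnected_image hdarboux
  simpa only [Pi.neg_def, neg_neg] using hcont.neg

theorem limit_eq_zero_of_convexOn_rescale {g κ : ℝ → ℝ} {L s τ : ℝ}
    (hg : StrictAntiOn g (Ici 0)) (hL : Tendsto g atTop (𝓝 L)) (hs : 1 < s) (hτ : 0 ≤ τ)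
    (hκ_nonneg : ∀ x, τ ≤ x → 0 ≤ κ x) (hκ : ∀ x, τ ≤ x → g (κ x) = s * g x)
    (hκ_convex : ConvexOn ℝ (Ici τ) κ) : L = 0 := by
  have hgt : ∀ x, 0 ≤ x → L < g x := fun x hx => hg.lt_of_tendsto_atTop hL hx
  have hL_nonneg : 0 ≤ L := by
    have : L ≤ s * L := ge_of_tendsto (hL.const_mul s) <| by
      filter_upwards [eventually_ge_atTop τ] with x hx
      exact hκ x hx ▸ (hgt _ (hκ_nonneg x hx)).le
    nlinarith
  refine le_antisymm (not_lt.1 fun hL_pos => ?_) hL_nonneg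
  have hκ_mono : StrictMonoOn κ (Ici τ) := fun x hx y hy hxy =>
    (hg.lt_iff_gt (hκ_nonneg y hy) (hκ_nonneg x hx)).1 <| by
      rw [hκ x hx, hκ y hy]
      exact mul_lt_mul_of_pos_left (hg (hτ.trans hx) (hτ.trans hy) hxy) (by linarith)
  -- `g (κ x) = s * g x > s * L`, whereas `g < s * L` on `[M, ∞)`
  obtain ⟨M, hM⟩ := eventually_atTop.1 (hL.eventually_lt_const (lt_mul_of_one_lt_left hL_pos hs))
  have hκ_bdd : BddAbove (κ '' Ici τ) := ⟨M, by
    rintro _ ⟨x, hx, rfl⟩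
    by_contra! hMx
    have := hM _ hMx.le
    rw [hκ x hx] at this
    nlinarith [hgt x (hτ.trans hx)]⟩
  have hτ1 : τ + 1 ∈ Ici τ := by simp
  exact (hκ_convex.antitoneOn_Ici_of_bddAbove hκ_bdd self_mem_Ici hτ1 (by linarith)).not_gt
    (hκ_mono self_mem_Ici hτ1 (by linarith))

theorem regular_reward_properties_general
    (r r' : ℝ → ℝ)
    (hr_concave : StrictConcaveOn ℝ (Ici (0 : ℝ)) r)
    (hr_deriv : ∀ x : ℝ, 0 ≤ x → HasDerivWithinAt r (r' x) (Ici (0 : ℝ)) x)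
    (L : ℝ) (hL : Tendsto r' atTop (nhds L))
    (s : ℝ) (hs : 1 < s)
    (τ : ℝ) (hτ_nonneg : 0 ≤ τ)
    (κ : ℝ → ℝ)
    (hκ_nonneg : ∀ x : ℝ, τ ≤ x → 0 ≤ κ x)
    (hκ_spec : ∀ x : ℝ, τ ≤ x → r' (κ x) = s * r' x)
    (hκ_convex : ConvexOn ℝ (Ici τ) κ) :
    StrictMonoOn r (Ici (0 : ℝ)) ∧
      ContinuousOn r' (Ici (0 : ℝ)) ∧
      StrictAntiOn r' (Ici (0 : ℝ)) ∧
      L = 0 := by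
  have hr'_anti : StrictAntiOn r' (Ici 0) := hr_concave.strictAntiOn_of_hasDerivWithinAt hr_deriv
  have hL_zero : L = 0 :=
    limit_eq_zero_of_convexOn_rescale hr'_anti hL hs hτ_nonneg hκ_nonneg hκ_spec hκ_convex
  have hr'_pos : ∀ x ∈ Ici (0 : ℝ), 0 < r' x := fun x hx =>
    hL_zero ▸ hr'_anti.lt_of_tendsto_atTop hL hx
  exact ⟨hr_concave.concaveOn.strictMonoOn_of_hasDerivWithinAt_pos hr_deriv hr'_pos,
    hr'_anti.continuousOn_Ici_of_hasDerivWithinAt hr_deriv, hr'_anti, hL_zero⟩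

/-- **Properties of a regular reward function** (Proposition 5). Let `r` be a reward
function that is strictly concave and differentiable on `[0, ∞)` with derivative `r'`,
where `r'` tends to `L` at `+∞`. Suppose there is `s` with `1 < s` and `s * L < r' 0`
such that the function `κ_s` (defined on `[τ_s, ∞)` by `r' (κ_s x) = s * r' x`, where
`τ_s` is the point with `r' τ_s = r' 0 / s`) is convex. Then `r` is strictly increasing
on `[0, ∞)`, `r'` is continuous and strictly decreasing on `[0, ∞)`, and `L = 0`. -/
theorem regular_reward_properties
    (r r' : ℝ → ℝ)
    (hr_zero : r 0 = 0)
    (hr_nonneg : ∀ x : ℝ, 0 ≤ x → 0 ≤ r x)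
    (hr_mono : MonotoneOn r (Ici (0 : ℝ)))
    (hr_lip : ∃ K : NNReal, LipschitzOnWith K r (Ici (0 : ℝ)))
    (hr_concave : StrictConcaveOn ℝ (Ici (0 : ℝ)) r)
    (hr_deriv : ∀ x : ℝ, 0 ≤ x → HasDerivWithinAt r (r' x) (Ici (0 : ℝ)) x)
    (L : ℝ) (hL : Tendsto r' atTop (nhds L))
    (s : ℝ) (hs : 1 < s) (hsL : s * L < r' 0)
    (τ : ℝ) (hτ_nonneg : 0 ≤ τ) (hτ_spec : r' τ = r' 0 / s)
    (κ : ℝ → ℝ)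
    (hκ_nonneg : ∀ x : ℝ, τ ≤ x → 0 ≤ κ x)
    (hκ_spec : ∀ x : ℝ, τ ≤ x → r' (κ x) = s * r' x)
    (hκ_convex : ConvexOn ℝ (Ici τ) κ) :
    StrictMonoOn r (Ici (0 : ℝ)) ∧
      ContinuousOn r' (Ici (0 : ℝ)) ∧
      StrictAntiOn r' (Ici (0 : ℝ)) ∧
      L = 0 :=
  regular_reward_properties_general r r' hr_concave hr_deriv L hL s hs τ hτ_nonneg κ hκ_nonneg
    hκ_spec hκ_convex
end

section
/- Let r be a regular reward function, and let s > 1. Define κ̄_s(x) := κ_s(max(x, τ_s)) for x ≥ 0. Then: (i) 0 ≤ κ̄_s(x) < x for every x > 0; and (ii) κ̄_s is continuous, nondecreasing, and convex on [0,∞). -/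
open Set Filter MeasureTheory

/-- A regular reward function `r` with derivative `r'`: `r : [0,∞) → [0,∞)` is
nondecreasing, Lipschitz, strictly concave, differentiable, with `r 0 = 0`; its
derivative `r'` is continuous, strictly decreasing, positive, and tends to `0` at `+∞`.
For each `s ≥ 1`, `τ s` is the unique point with `r' (τ s) = r' 0 / s`, and
`κ s : [τ s, ∞) → [0, ∞)` is defined by the relation `r' (κ s x) = s * r' x`
(for `s = 1` these reduce to `τ 1 = 0` and `κ 1 = id`); regularity means `κ s` is
convex on `[τ s, ∞)` for all `s > 1`. -/
structure RegularReward where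
  r : ℝ → ℝ
  r' : ℝ → ℝ
  r_zero : r 0 = 0
  r_nonneg : ∀ x : ℝ, 0 ≤ x → 0 ≤ r x
  r_mono : MonotoneOn r (Ici (0 : ℝ))
  r_lip : ∃ K : NNReal, LipschitzOnWith K r (Ici (0 : ℝ))
  r_strictConcave : StrictConcaveOn ℝ (Ici (0 : ℝ)) r
  r_hasDeriv : ∀ x : ℝ, 0 ≤ x → HasDerivWithinAt r (r' x) (Ici (0 : ℝ)) x
  deriv_cont : ContinuousOn r' (Ici (0 : ℝ))
  deriv_strictAnti : StrictAntiOn r' (Ici (0 : ℝ))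
  deriv_pos : ∀ x : ℝ, 0 ≤ x → 0 < r' x
  deriv_tendsto_zero : Tendsto r' atTop (nhds 0)
  τ : ℝ → ℝ
  κ : ℝ → ℝ → ℝ
  τ_nonneg : ∀ s : ℝ, 1 ≤ s → 0 ≤ τ s
  τ_spec : ∀ s : ℝ, 1 ≤ s → r' (τ s) = r' 0 / s
  κ_nonneg : ∀ s : ℝ, 1 ≤ s → ∀ x : ℝ, τ s ≤ x → 0 ≤ κ s x
  κ_spec : ∀ s : ℝ, 1 ≤ s → ∀ x : ℝ, τ s ≤ x → r' (κ s x) = s * r' x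
  κ_convex : ∀ s : ℝ, 1 < s → ConvexOn ℝ (Ici (τ s)) (κ s)

namespace RegularReward

/-- The extension `κ̄_s (x) := κ_s (max x τ_s)` of `κ_s` to `[0, ∞)`. -/
noncomputable def kbar (R : RegularReward) (s : ℝ) (x : ℝ) : ℝ :=
  R.κ s (max x (R.τ s))

/-- `M_s(x) = ⌈ln (r' 0 / r' x) / ln s⌉`. -/
noncomputable def M (R : RegularReward) (s : ℝ) (x : ℝ) : ℕ :=
  ⌈Real.log (R.r' 0 / R.r' x) / Real.log s⌉₊

/-- `M̃_s(x) = ⌊ln (r' 0 / r' x) / ln s⌋ + 1`. -/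
noncomputable def Mt (R : RegularReward) (s : ℝ) (x : ℝ) : ℕ :=
  ⌊Real.log (R.r' 0 / R.r' x) / Real.log s⌋₊ + 1

/-- `η_s(x) := ∑_{i=1}^∞ κ̄_s^{(i-1)}(x)`, a finite sum since `κ̄_s^{(i)}(x) = 0` for
`i ≥ M_s(x)`. -/
noncomputable def η (R : RegularReward) (s : ℝ) (x : ℝ) : ℝ :=
  ∑' i : ℕ, (R.kbar s)^[i] x

end RegularReward

/-!
Since `r'` is strictly decreasing, the defining relation `r' (κ_s x) = s r' x > r' x` forces
`κ_s x < x`, and `κ_s` is nondecreasing on `[τ_s, ∞)` with `κ_s τ_s = 0`. Hence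
`κ̄_s = κ_s ∘ max · τ_s` is a nondecreasing convex function composed with a convex one, so it is
convex, and therefore continuous, on all of `ℝ`.
-/

theorem range_max_right {α : Type*} [LinearOrder α] (c : α) :
    range (fun x : α => max x c) = Ici c := by
  ext y
  refine ⟨?_, fun hy => ⟨y, max_eq_left hy⟩⟩
  rintro ⟨x, rfl⟩
  exact le_max_right x c

namespace RegularReward

variable (R : RegularReward) {s x y : ℝ}

theorem deriv_lt_deriv_iff (hx : 0 ≤ x) (hy : 0 ≤ y) : R.r' x < R.r' y ↔ y < x :=
  R.deriv_strictAnti.lt_iff_gt hx hy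

theorem deriv_le_deriv_iff (hx : 0 ≤ x) (hy : 0 ≤ y) : R.r' x ≤ R.r' y ↔ y ≤ x :=
  R.deriv_strictAnti.le_iff_ge hx hy

theorem κ_τ (hs : 1 ≤ s) : R.κ s (R.τ s) = 0 := by
  have hκτ : R.r' (R.κ s (R.τ s)) = R.r' 0 := by
    rw [R.κ_spec s hs _ le_rfl, R.τ_spec s hs, mul_div_cancel₀ _ (by positivity)]
  exact R.deriv_strictAnti.injOn (R.κ_nonneg s hs _ le_rfl) (mem_Ici.mpr le_rfl) hκτ

theorem κ_monotoneOn (hs : 1 ≤ s) : MonotoneOn (R.κ s) (Ici (R.τ s)) := by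
  intro x hx y hy hxy
  have hτ := R.τ_nonneg s hs
  rw [← R.deriv_le_deriv_iff (R.κ_nonneg s hs y hy) (R.κ_nonneg s hs x hx),
    R.κ_spec s hs x hx, R.κ_spec s hs y hy]
  gcongr
  exact (R.deriv_le_deriv_iff (hτ.trans hy) (hτ.trans hx)).mpr hxy

theorem κ_lt_self (hs : 1 < s) (hx : R.τ s ≤ x) : R.κ s x < x := by
  have hx0 : 0 ≤ x := (R.τ_nonneg s hs.le).trans hx
  rw [← R.deriv_lt_deriv_iff hx0 (R.κ_nonneg s hs.le x hx), R.κ_spec s hs.le x hx]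
  exact lt_mul_left (R.deriv_pos x hx0) hs

theorem kbar_nonneg (hs : 1 ≤ s) (x : ℝ) : 0 ≤ R.kbar s x :=
  R.κ_nonneg s hs _ (le_max_right _ _)

theorem kbar_of_le (hs : 1 ≤ s) (hx : x ≤ R.τ s) : R.kbar s x = 0 := by
  rw [kbar, max_eq_right hx, R.κ_τ hs]

theorem kbar_lt_self (hs : 1 < s) (hx : 0 < x) : R.kbar s x < x := by
  rcases le_total (R.τ s) x with hτx | hxτ
  · rw [kbar, max_eq_left hτx]
    exact R.κ_lt_self hs hτx
  · rwa [R.kbar_of_le hs.le hxτ]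

theorem kbar_monotone (hs : 1 ≤ s) : Monotone (R.kbar s) := fun _ _ hxy =>
  R.κ_monotoneOn hs (mem_Ici.mpr (le_max_right _ _)) (mem_Ici.mpr (le_max_right _ _))
    (max_le_max hxy le_rfl)

theorem kbar_convexOn (hs : 1 < s) : ConvexOn ℝ univ (R.kbar s) := by
  have hmax : ConvexOn ℝ univ (fun x : ℝ => max x (R.τ s)) :=
    convexOn_id convex_univ |>.sup (convexOn_const _ convex_univ)
  have hκ : ConvexOn ℝ ((fun x : ℝ => max x (R.τ s)) '' univ) (R.κ s) := by
    rw [image_univ, range_max_right]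
    exact R.κ_convex s hs
  have hκ_mono : MonotoneOn (R.κ s) ((fun x : ℝ => max x (R.τ s)) '' univ) := by
    rw [image_univ, range_max_right]
    exact R.κ_monotoneOn hs.le
  exact hκ.comp hmax hκ_mono

theorem kbar_continuous (hs : 1 < s) : Continuous (R.kbar s) :=
  continuousOn_univ.mp <| (R.kbar_convexOn hs).continuousOn isOpen_univ

end RegularReward

/-- **Properties of `κ̄_s`** (Proposition 6, parts 1–2). For a regular reward function
and `s > 1`: (i) `0 ≤ κ̄_s(x) < x` for every `x > 0`; (ii) `κ̄_s` is continuous,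
nondecreasing, and convex on `[0, ∞)`. -/
theorem kbar_properties (R : RegularReward) (s : ℝ) (hs : 1 < s) :
    (∀ x : ℝ, 0 < x → 0 ≤ R.kbar s x ∧ R.kbar s x < x) ∧
      ContinuousOn (R.kbar s) (Ici (0 : ℝ)) ∧
      MonotoneOn (R.kbar s) (Ici (0 : ℝ)) ∧
      ConvexOn ℝ (Ici (0 : ℝ)) (R.kbar s) :=
  ⟨fun _ hx => ⟨R.kbar_nonneg hs.le _, R.kbar_lt_self hs hx⟩,
    (R.kbar_continuous hs).continuousOn,
    (R.kbar_monotone hs.le).monotoneOn _,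
    (R.kbar_convexOn hs).subset (subset_univ _) (convex_Ici 0)⟩
end
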